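/- arXiv:2404.14189 — 4 statements merged into one kernel-verified Lean document; each statement's English description precedes it below -/
import Mathlib

section
/- Let A be a Noetherian local ring that is a quotient of a power series ring K[[x, y₁, …, y_m]] by the principal ideal generated by f = x^a - g(y₁,…,y_m), where K is a field, a ≥ 2, g ∈ (y₁,…,y_m)^b \ (y₁,…,y_m)^{b+1} with b ≥ a. Then the ideal Q = (y₁,…,y_m)A is a reduction of the maximal ideal m of A; concretely, m^a = Q·m^{a-1}. -/
open MvPowerSeries

private lemma aux_span_finset {σ : Type*} {K : Type*} [CommRing K] (s : Finset σ)
    (φ : MvPowerSeries σ K) (hsupp : ∀ d : σ →₀ ℕ, coeff d φ ≠ 0 → d.support ⊆ s)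
    (h0 : constantCoeff φ = 0) :
    φ ∈ Ideal.span (Set.range (X : σ → MvPowerSeries σ K)) := by
  classical
  induction s using Finset.induction generalizing φ with
  | empty =>
    have hz : φ = 0 := by
      ext d
      by_contra hd
      have hds := hsupp d hd
      simp only [Finset.subset_empty, Finsupp.support_eq_empty] at hds
      subst hds
      exact hd h0
    simp [hz]
  | @insert i s hi ih =>
    set φ' : MvPowerSeries σ K := fun d => if d i = 0 then φ d else 0 with hφ'def
    have hcoeff' : ∀ d : σ →₀ ℕ, coeff d φ' = if d i = 0 then coeff d φ else 0 := by
      intro d; rfl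
    have h1 : φ' ∈ Ideal.span (Set.range (X : σ → MvPowerSeries σ K)) := by
      apply ih
      · intro d hd
        rw [hcoeff'] at hd
        by_cases hdi : d i = 0
        · rw [if_pos hdi] at hd
          intro j hj
          rcases Finset.mem_insert.mp (hsupp d hd hj) with h | h
          · rw [h] at hj
            exact absurd hdi (Finsupp.mem_support_iff.mp hj)
          · exact h
        · rw [if_neg hdi] at hd; exact absurd rfl hd
      · have : coeff 0 φ' = coeff 0 φ := by rw [hcoeff']; simp
        rw [← h0]; exact this
    have hdvd : (X i : MvPowerSeries σ K) ∣ (φ - φ') := by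
      rw [X_dvd_iff]
      intro d hd
      rw [map_sub, hcoeff', if_pos hd, sub_self]
    obtain ⟨c, hc⟩ := hdvd
    have h2 : φ - φ' ∈ Ideal.span (Set.range (X : σ → MvPowerSeries σ K)) := by
      rw [hc]
      exact Ideal.mul_mem_right _ _ (Ideal.subset_span ⟨i, rfl⟩)
    have := add_mem h2 h1
    simpa using this
private lemma maxIdeal_eq_span_X {σ : Type*} [Fintype σ] {K : Type*} [Field K] :
    IsLocalRing.maximalIdeal (MvPowerSeries σ K)
      = Ideal.span (Set.range (X : σ → MvPowerSeries σ K)) := by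
  classical
  apply le_antisymm
  · intro φ hφ
    rw [IsLocalRing.mem_maximalIdeal, mem_nonunits_iff, isUnit_iff_constantCoeff,
      isUnit_iff_ne_zero, not_not] at hφ
    exact aux_span_finset Finset.univ φ (fun d _ => Finset.subset_univ _) hφ
  · rw [Ideal.span_le]
    rintro _ ⟨i, rfl⟩
    rw [SetLike.mem_coe, IsLocalRing.mem_maximalIdeal, mem_nonunits_iff,
      isUnit_iff_constantCoeff, constantCoeff_X]
    exact not_isUnit_zero

set_option maxHeartbeats 2000000 in
/-- For a Zariski-type hypersurface `A = K⟦x,y₁,…,y_m⟧/(xᵃ - g(y))` with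
`g ∈ (y)ᵇ \ (y)^{b+1}` and `2 ≤ a ≤ b`, the ideal `Q = (y₁,…,y_m)A` is a
reduction of the maximal ideal `𝔪` of `A`; concretely `𝔪ᵃ = Q·𝔪^{a-1}`. -/
theorem stmt13 (K : Type*) [Field K] (m : ℕ) (hm : 1 ≤ m) (a b : ℕ)
    (ha : 2 ≤ a) (hab : a ≤ b)
    (J : Ideal (MvPowerSeries (Fin (m + 1)) K))
    (hJ : J = Ideal.span (Set.range fun i : Fin m => MvPowerSeries.X i.succ))
    (g : MvPowerSeries (Fin (m + 1)) K) (hg : g ∈ J ^ b) (hg' : g ∉ J ^ (b + 1))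
    (f : MvPowerSeries (Fin (m + 1)) K) (hf : f = MvPowerSeries.X 0 ^ a - g)
    (M Q : Ideal (MvPowerSeries (Fin (m + 1)) K ⧸ Ideal.span {f}))
    (hM : M = Ideal.map (Ideal.Quotient.mk (Ideal.span {f}))
      (IsLocalRing.maximalIdeal (MvPowerSeries (Fin (m + 1)) K)))
    (hQ : Q = Ideal.map (Ideal.Quotient.mk (Ideal.span {f})) J) :
    Q ≤ M ∧ M ^ a = Q * M ^ (a - 1) := by
  set π := Ideal.Quotient.mk (Ideal.span {f}) with hπ
  -- decompose the maximal ideal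
  have hrange : Set.range (X : Fin (m + 1) → MvPowerSeries (Fin (m + 1)) K)
      = {X 0} ∪ Set.range (fun i : Fin m => (X i.succ : MvPowerSeries (Fin (m + 1)) K)) := by
    ext φ
    constructor
    · rintro ⟨j, rfl⟩
      rcases Fin.eq_zero_or_eq_succ j with h | ⟨i, rfl⟩
      · left; simp [h]
      · right; exact ⟨i, rfl⟩
    · rintro (h | ⟨i, rfl⟩)
      · exact ⟨0, h.symm⟩
      · exact ⟨i.succ, rfl⟩
  have hmax : IsLocalRing.maximalIdeal (MvPowerSeries (Fin (m + 1)) K)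
      = Ideal.span {X 0} ⊔ J := by
    rw [maxIdeal_eq_span_X, hrange, Ideal.span_union, hJ]
  have hM' : M = Ideal.span {π (X 0)} ⊔ Q := by
    rw [hM, hmax, Ideal.map_sup, hQ, Ideal.map_span]
    simp
  have hQM : Q ≤ M := by rw [hM']; exact le_sup_right
  set T : Ideal (MvPowerSeries (Fin (m + 1)) K ⧸ Ideal.span {f})
    := Ideal.span {π (X 0)} with hT
  -- x^a = g in the quotient
  have hxa : π (X 0) ^ a = π g := by
    have hf0 : π f = 0 := by
      rw [hπ, Ideal.Quotient.eq_zero_iff_mem]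
      exact Ideal.subset_span rfl
    have : π (X 0 ^ a) - π g = π f := by rw [← RingHom.map_sub π]; exact congrArg π hf.symm
    rw [hf0, sub_eq_zero] at this
    rw [← this, map_pow]
  -- T^a ≤ Q * M^(a-1)
  have hTa : T ^ a ≤ Q * M ^ (a - 1) := by
    have hspan : T ^ a = Ideal.span {π (X 0) ^ a} := by
      rw [hT, Ideal.span_singleton_pow]
    have hgQ : π g ∈ Q ^ b := by
      rw [hQ, ← Ideal.map_pow]
      exact Ideal.mem_map_of_mem _ hg
    have hQb : Q ^ b ≤ Q ^ a := Ideal.pow_le_pow_right hab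
    have hQa : Q ^ a ≤ Q * M ^ (a - 1) := by
      have : Q ^ a = Q * Q ^ (a - 1) := by
        rw [← pow_succ' Q (a - 1)]
        congr 1
        omega
      rw [this]
      exact Ideal.mul_mono le_rfl (Ideal.pow_right_mono hQM _)
    rw [hspan, hxa, Ideal.span_le]
    intro z hz
    rw [Set.mem_singleton_iff] at hz
    subst hz
    exact hQa (hQb hgQ)
  -- key induction : M^k ≤ Q * M^(k-1) ⊔ T^k for k ≥ 1
  have key : ∀ k : ℕ, 1 ≤ k → M ^ k ≤ Q * M ^ (k - 1) ⊔ T ^ k := by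
    intro k hk
    induction k with
    | zero => omega
    | succ n ihn =>
      rcases Nat.eq_or_lt_of_le hk with h1 | h1
      · -- n + 1 = 1
        have hn : n = 0 := by omega
        subst hn
        simp only [zero_add, pow_one, Nat.sub_self, pow_zero, mul_one]
        rw [hM', pow_one (T ⊔ Q), pow_zero (T ⊔ Q), mul_one Q, pow_one T]
        exact sup_le le_sup_right le_sup_left
      · have hn1 : 1 ≤ n := by omega
        have ihn' := ihn hn1
        have step : M ^ (n + 1) = M ^ n * M := by rw [← pow_succ M n]
        rw [step]
        calc M ^ n * M ≤ (Q * M ^ (n - 1) ⊔ T ^ n) * M :=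
              Ideal.mul_mono ihn' le_rfl
          _ = Q * M ^ (n - 1) * M ⊔ T ^ n * M := by rw [Submodule.sup_mul]
          _ ≤ Q * M ^ n ⊔ T ^ (n + 1) := by
              apply sup_le
              · apply le_sup_of_le_left
                rw [mul_assoc]
                apply Ideal.mul_mono le_rfl
                rw [← pow_succ M (n - 1)]
                have hcast : n - 1 + 1 = n := by omega
                rw [hcast]
              · have : T ^ n * M = T ^ n * T ⊔ T ^ n * Q := by
                  rw [hM', hT, Submodule.mul_sup]
                rw [this]
                apply sup_le
                · apply le_sup_of_le_right
                  rw [← pow_succ T n]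
                · apply le_sup_of_le_left
                  rw [mul_comm (T ^ n) Q]
                  apply Ideal.mul_mono le_rfl
                  exact Ideal.pow_right_mono (by rw [hM', hT]; exact le_sup_left) n
          _ ≤ Q * M ^ ((n+1) - 1) ⊔ T ^ (n + 1) := le_rfl
  refine ⟨hQM, le_antisymm ?_ ?_⟩
  · have h1 : M ^ a ≤ Q * M ^ (a - 1) ⊔ T ^ a := key a (by omega)
    exact h1.trans (sup_le le_rfl hTa)
  · calc Q * M ^ (a - 1) ≤ M * M ^ (a - 1) := Ideal.mul_mono hQM le_rfl
      _ = M ^ a := by rw [← pow_succ' M (a - 1)]; congr 1; omega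
end

section
/- Let (A, m) be a one-dimensional Cohen–Macaulay local ring with infinite residue field, F = {F_n} a Hilbert filtration, and Q = (x) a minimal reduction of F. Suppose r(F) = nr(F) = r ≥ 2 and ℓ(F_n/xF_{n-1}) = 1 for all 2 ≤ n ≤ r. Then ℓ(F_n/F_{n+1}) = e₀(F) - 1 for 1 ≤ n ≤ r-1 and ℓ(F_n/F_{n+1}) = e₀(F) for n ≥ r. -/
open IsLocalRing

variable {A : Type*} [CommRing A]

/-- The length of a module, as the Krull dimension of its lattice of submodules. -/
noncomputable def moduleLength (A M : Type*) [CommRing A] [AddCommGroup M]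
    [Module A M] : WithBot ℕ∞ :=
  Order.krullDim (Submodule A M)

/-- `depthGe R I n` : there is a regular sequence of length `n` inside `I`. -/
def depthGe (R : Type*) [CommRing R] (I : Ideal R) (n : ℕ) : Prop :=
  ∃ s : List R, s.length = n ∧ (∀ x ∈ s, x ∈ I) ∧ RingTheory.Sequence.IsRegular R s

/-- A Hilbert filtration: a descending multiplicative filtration of ideals with
`F 0 = A`, `F 1` an `𝔪`-primary ideal, and `F (n+1) = F 1 * F n` for `n ≫ 0`. -/
def IsHilbertFiltration [IsLocalRing A] (F : ℕ → Ideal A) : Prop :=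
  F 0 = ⊤ ∧ Antitone F ∧ (∀ i j, F i * F j ≤ F (i + j)) ∧
    F 1 ≤ maximalIdeal A ∧ (∃ k : ℕ, maximalIdeal A ^ k ≤ F 1) ∧
    (∃ N : ℕ, ∀ n ≥ N, F (n + 1) = F 1 * F n)

/-- `Q` is a reduction of the filtration `F`. -/
def IsReductionOf (Q : Ideal A) (F : ℕ → Ideal A) : Prop :=
  Q ≤ F 1 ∧ ∃ N : ℕ, ∀ n ≥ N, F (n + 1) = Q * F n

/-- `Q` is a minimal reduction of the filtration `F`. -/
def IsMinimalReduction (Q : Ideal A) (F : ℕ → Ideal A) : Prop :=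
  IsReductionOf Q F ∧ ∀ Q' : Ideal A, Q' ≤ Q → IsReductionOf Q' F → Q' = Q

section Aux
open Order


section Lattice
variable {α : Type*} [Lattice α] [IsModularLattice α]

/-- Extend an LTSeries to end at a given larger-or-equal element. -/
lemma LTSeries.extend_to {β : Type*} [PartialOrder β] (q : LTSeries β) (b : β) (h : q.last ≤ b) :
    ∃ q' : LTSeries β, q'.last = b ∧ q.length ≤ q'.length ∧
      (q.last ≠ b → q.length + 1 ≤ q'.length) := by
  by_cases he : q.last = b
  · exact ⟨q, he, le_rfl, fun h' => absurd he h'⟩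
  · refine ⟨q.snoc b (h.lt_of_ne he), RelSeries.last_snoc _ _ _, ?_, fun _ => ?_⟩ <;>
      simp [RelSeries.snoc_length]

lemma chain_split (a : α) : ∀ (n : ℕ) (p : LTSeries α), p.length = n →
    ∃ (q : LTSeries (Set.Iic a)) (s : LTSeries (Set.Ici a)),
      p.length ≤ q.length + s.length ∧ (q.last : α) = p.last ⊓ a ∧
        (s.last : α) = p.last ⊔ a := by
  intro n
  induction n with
  | zero =>
    intro p _
    exact ⟨RelSeries.singleton _ ⟨p.last ⊓ a, inf_le_right⟩,
      RelSeries.singleton _ ⟨p.last ⊔ a, le_sup_right⟩, by omega,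
      by simp [RelSeries.last_singleton], by simp [RelSeries.last_singleton]⟩
  | succ n ih =>
    intro p hp
    have hlen : p.eraseLast.length = n := by simp [RelSeries.eraseLast, hp]
    obtain ⟨q, s, hqs, hq, hs⟩ := ih p.eraseLast hlen
    have hrel : p.eraseLast.last < p.last := p.eraseLast_last_rel_last (by omega)
    have hinf : p.eraseLast.last ⊓ a ≤ p.last ⊓ a := inf_le_inf_right a hrel.le
    have hsup : p.eraseLast.last ⊔ a ≤ p.last ⊔ a := sup_le_sup_right hrel.le a
    have key : p.eraseLast.last ⊓ a ≠ p.last ⊓ a ∨ p.eraseLast.last ⊔ a ≠ p.last ⊔ a := by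
      by_contra hc
      push_neg at hc
      exact hrel.ne (eq_of_le_of_inf_le_of_sup_le hrel.le hc.1.ge hc.2.ge)
    obtain ⟨q', hq'last, hq'1, hq'2⟩ :=
      q.extend_to ⟨p.last ⊓ a, inf_le_right⟩ (by rw [← Subtype.coe_le_coe, hq]; exact hinf)
    obtain ⟨s', hs'last, hs'1, hs'2⟩ :=
      s.extend_to ⟨p.last ⊔ a, le_sup_right⟩ (by rw [← Subtype.coe_le_coe, hs]; exact hsup)
    refine ⟨q', s', ?_, by rw [hq'last], by rw [hs'last]⟩
    rcases key with hk | hk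
    · have := hq'2 (by simp only [ne_eq, Subtype.ext_iff, hq]; exact hk)
      omega
    · have := hs'2 (by simp only [ne_eq, Subtype.ext_iff, hs]; exact hk)
      omega

end Lattice

lemma natcast_le_withbot {m n : ℕ} : (m : WithBot ℕ∞) ≤ (n : WithBot ℕ∞) ↔ m ≤ n := by
  exact_mod_cast Iff.rfl

lemma exists_ltSeries_of_krullDim_eq_nat {β : Type*} [Preorder β] {m : ℕ}
    (h : Order.krullDim β = (m : WithBot ℕ∞)) : ∃ p : LTSeries β, p.length = m := by
  have hne : Nonempty β := by
    by_contra hE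
    rw [not_nonempty_iff] at hE
    rw [krullDim_eq_bot] at h
    exact absurd h (by simp)
  by_contra hc
  push_neg at hc
  have hub : ∀ p : LTSeries β, p.length ≤ m := by
    intro p
    have := Order.LTSeries.length_le_krullDim p
    rw [h] at this
    exact natcast_le_withbot.mp this
  rcases Nat.eq_zero_or_pos m with hm | hm
  · exact hc (RelSeries.singleton _ (Classical.arbitrary β)) (by simp [hm])
  · have : Order.krullDim β ≤ ((m - 1 : ℕ) : WithBot ℕ∞) := by
      rw [krullDim_eq_iSup_length]
      rw [show ((m - 1 : ℕ) : WithBot ℕ∞) = ((((m-1:ℕ)) : ℕ∞) : WithBot ℕ∞) from rfl]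
      rw [WithBot.coe_le_coe]
      apply iSup_le
      intro p
      have h1 := hub p
      have h2 := hc p
      exact_mod_cast (by omega : p.length ≤ m - 1)
    rw [h] at this
    have := natcast_le_withbot.mp this
    omega

lemma krullDim_split {α : Type*} [Lattice α] [IsModularLattice α] (a : α) {m n : ℕ}
    (hIic : Order.krullDim (Set.Iic a) = (m : WithBot ℕ∞))
    (hIci : Order.krullDim (Set.Ici a) = (n : WithBot ℕ∞)) :
    Order.krullDim α = ((m + n : ℕ) : WithBot ℕ∞) := by
  apply le_antisymm
  · have : Nonempty α := ⟨a⟩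
    rw [krullDim_eq_iSup_length,
      show ((m + n : ℕ) : WithBot ℕ∞) = (((m + n :ℕ) : ℕ∞) : WithBot ℕ∞) from rfl,
      WithBot.coe_le_coe]
    apply iSup_le
    intro p
    obtain ⟨q, s, hqs, _, _⟩ := chain_split a p.length p rfl
    have h1 : q.length ≤ m := by
      have := Order.LTSeries.length_le_krullDim q; rw [hIic] at this; exact natcast_le_withbot.mp this
    have h2 : s.length ≤ n := by
      have := Order.LTSeries.length_le_krullDim s; rw [hIci] at this; exact natcast_le_withbot.mp this
    exact_mod_cast (by omega : p.length ≤ m + n)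
  · obtain ⟨q, hq⟩ := exists_ltSeries_of_krullDim_eq_nat hIic
    obtain ⟨s, hs⟩ := exists_ltSeries_of_krullDim_eq_nat hIci
    -- force q to end at a and s to start at a
    have hqa : q.last = (⟨a, le_refl a⟩ : Set.Iic a) := by
      by_contra hne
      have hlt : q.last < (⟨a, le_refl a⟩ : Set.Iic a) :=
        lt_of_le_of_ne (by exact q.last.2) hne
      have := Order.LTSeries.length_le_krullDim (q.snoc _ hlt)
      rw [hIic] at this
      have := natcast_le_withbot.mp this
      simp [RelSeries.snoc_length, hq] at this
    have hsa : s.head = (⟨a, le_refl a⟩ : Set.Ici a) := by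
      by_contra hne
      have hlt : (⟨a, le_refl a⟩ : Set.Ici a) < s.head :=
        lt_of_le_of_ne (by exact s.head.2) (Ne.symm hne)
      have := Order.LTSeries.length_le_krullDim (s.cons _ hlt)
      rw [hIci] at this
      have := natcast_le_withbot.mp this
      simp [RelSeries.cons_length, hs] at this
    have hmono1 : StrictMono (fun b : Set.Iic a => (b : α)) := fun _ _ h => h
    have hmono2 : StrictMono (fun b : Set.Ici a => (b : α)) := fun _ _ h => h
    let q' := q.map _ hmono1
    let s' := s.map _ hmono2
    have hconn : q'.last = s'.head := by
      simp only [q', s', LTSeries.last_map, LTSeries.head_map, hqa, hsa]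
    let p := q'.smash s' hconn
    have hplen : p.length = m + n := by
      simp only [p, RelSeries.smash_length, q', s']
      simp [LTSeries.map, hq, hs]
    have := Order.LTSeries.length_le_krullDim p
    rwa [hplen] at this
lemma key_length {A : Type*} [CommRing A] (x : A) (hreg : IsSMulRegular A x)
    (I : Ideal A) {e l : ℕ}
    (he : moduleLength A (A ⧸ Ideal.span {x}) = (e : WithBot ℕ∞))
    (hl : moduleLength A (A ⧸ I) = (l : WithBot ℕ∞)) :
    moduleLength A (A ⧸ (Ideal.span {x} * I)) = ((e + l : ℕ) : WithBot ℕ∞) := by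
  classical
  set J : Ideal A := Ideal.span {x} * I with hJ
  have hJle : J ≤ Ideal.span {x} := Ideal.mul_le_left
  set a : Submodule A (A ⧸ J) := Submodule.map (Submodule.mkQ J) (Ideal.span {x}) with ha
  -- upper part: Ici a has krullDim e
  have hIci : Order.krullDim (Set.Ici a) = (e : WithBot ℕ∞) := by
    have e1 : Submodule A ((A ⧸ J) ⧸ a) ≃o Set.Ici a := Submodule.comapMkQRelIso a
    have e2 : ((A ⧸ J) ⧸ a) ≃ₗ[A] A ⧸ Ideal.span {x} :=
      Submodule.quotientQuotientEquivQuotient J (Ideal.span {x}) hJle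
    have e3 : Submodule A ((A ⧸ J) ⧸ a) ≃o Submodule A (A ⧸ Ideal.span {x}) :=
      Submodule.orderIsoMapComap e2
    rw [← Order.krullDim_eq_of_orderIso e1, Order.krullDim_eq_of_orderIso e3]
    exact he
  -- lower part: Iic a has krullDim l
  have hIic : Order.krullDim (Set.Iic a) = (l : WithBot ℕ∞) := by
    set φ : A →ₗ[A] A ⧸ J := (Submodule.mkQ J) ∘ₗ (LinearMap.toSpanSingleton A A x) with hφ
    have hker : LinearMap.ker φ = I := by
      ext t
      simp only [hφ, LinearMap.mem_ker, LinearMap.comp_apply,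
        LinearMap.toSpanSingleton_apply, Submodule.mkQ_apply,
        Submodule.Quotient.mk_eq_zero]
      rw [smul_eq_mul, hJ]
      constructor
      · intro h
        have : t * x = x * t := mul_comm t x
        rw [this] at h
        obtain ⟨z, hz, hzx⟩ := Ideal.mem_span_singleton_mul.mp h
        have : z = t := hreg (by simpa [smul_eq_mul] using hzx)
        rwa [← this]
      · intro h
        have h2 := Ideal.mul_mem_mul (Ideal.mem_span_singleton_self x) h
        rwa [mul_comm x t] at h2
    have hrange : LinearMap.range φ = a := by
      rw [hφ, LinearMap.range_comp, ← LinearMap.span_singleton_eq_range]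
    have e4 : (A ⧸ I) ≃ₗ[A] a := by
      rw [← hker, ← hrange]
      exact φ.quotKerEquivRange
    have e5 : Submodule A (A ⧸ I) ≃o Submodule A a := Submodule.orderIsoMapComap e4
    have e6 : Submodule A a ≃o Set.Iic a := Submodule.MapSubtype.orderIso a
    rw [← Order.krullDim_eq_of_orderIso e6, ← Order.krullDim_eq_of_orderIso e5]
    exact hl
  have := krullDim_split a hIic hIci
  rw [show l + e = e + l from Nat.add_comm l e] at this
  exact this

end Aux

/-- Let `(A,𝔪)` be a one-dimensional Cohen–Macaulay local ring with infinite
residue field, `F` a Hilbert filtration and `Q = (x)` a principal minimal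
reduction of `F`.  Suppose `r(F) = nr(F) = r ≥ 2` and
`ℓ(F n / x F (n-1)) = 1` for all `2 ≤ n ≤ r`.  Then, writing
`λ n = ℓ(A / F n)` and `e₀ = ℓ(A/xA)`, one has
`ℓ(F n / F (n+1)) = λ (n+1) - λ n = e₀ - 1` for `1 ≤ n ≤ r - 1` and
`ℓ(F n / F (n+1)) = e₀` for `n ≥ r`. -/
theorem stmt16 [IsNoetherianRing A] [IsLocalRing A] [Infinite (ResidueField A)]
    (hdim : ringKrullDim A = 1) (hdepth : depthGe A (maximalIdeal A) 1)
    (F : ℕ → Ideal A) (hF : IsHilbertFiltration F)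
    (x : A) (hx : x ∈ F 1)
    (hQ : IsMinimalReduction (Ideal.span {x}) F)
    (r : ℕ) (hr2 : 2 ≤ r)
    (hred : ∀ n : ℕ, r ≤ n → F (n + 1) = Ideal.span {x} * F n)
    (hnr : ∀ n : ℕ, 1 ≤ n → n < r → F (n + 1) ≠ Ideal.span {x} * F n)
    (lam : ℕ → ℕ) (hlam : ∀ n, moduleLength A (A ⧸ F n) = (lam n : WithBot ℕ∞))
    (e₀ : ℕ) (he₀ : moduleLength A (A ⧸ Ideal.span {x}) = (e₀ : WithBot ℕ∞))
    (hone : ∀ n : ℕ, 2 ≤ n → n ≤ r →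
      moduleLength A (A ⧸ (Ideal.span {x} * F (n - 1))) = ((lam n + 1 : ℕ) : WithBot ℕ∞)) :
    (∀ n : ℕ, 1 ≤ n → n ≤ r - 1 → lam (n + 1) = lam n + (e₀ - 1)) ∧
      (∀ n : ℕ, r ≤ n → lam (n + 1) = lam n + e₀) := by
  obtain ⟨hF0, hFanti, hFmul, hFm, ⟨k, hk⟩, -⟩ := hF
  -- extract a regular element y from the depth hypothesis
  obtain ⟨s, hs1, hs2, hs3⟩ := hdepth
  obtain ⟨y, rfl⟩ : ∃ y, s = [y] := List.length_eq_one_iff.mp hs1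
  have hy : IsSMulRegular A y :=
    (RingTheory.Sequence.isWeaklyRegular_singleton_iff A y).mp hs3.toIsWeaklyRegular
  have hymem : y ∈ maximalIdeal A := hs2 y (by simp)
  -- powers of F 1 are contained in F n
  have hpow : ∀ n, F 1 ^ n ≤ F n := by
    intro n
    induction n with
    | zero => rw [pow_zero, Ideal.one_eq_top, hF0]
    | succ n ihn =>
      calc F 1 ^ (n + 1) = F 1 ^ n * F 1 := pow_succ _ _
        _ ≤ F n * F 1 := Ideal.mul_mono_left ihn
        _ ≤ F (n + 1) := hFmul n 1
  -- a power of the maximal ideal lies in (x)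
  have hmN : (maximalIdeal A) ^ (k * (r + 1)) ≤ Ideal.span {x} := by
    rw [pow_mul]
    calc (maximalIdeal A ^ k) ^ (r + 1) ≤ (F 1) ^ (r + 1) := pow_le_pow_left' hk _
      _ ≤ F (r + 1) := hpow _
      _ = Ideal.span {x} * F r := hred r le_rfl
      _ ≤ Ideal.span {x} := Ideal.mul_le_left
  have hyN : y ^ (k * (r + 1)) ∈ Ideal.span {x} :=
    hmN (Ideal.pow_mem_pow hymem _)
  obtain ⟨c, hc⟩ := Ideal.mem_span_singleton'.mp hyN
  -- x is a regular element
  have hxreg : IsSMulRegular A x := by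
    intro u v huv
    have h2 : y ^ (k * (r + 1)) • u = y ^ (k * (r + 1)) • v := by
      simp only [smul_eq_mul] at huv ⊢
      rw [← hc, mul_assoc, mul_assoc, huv]
    exact hy.pow _ h2
  -- (x) is a proper ideal
  have hxne : Ideal.span {x} ≠ ⊤ := by
    intro h
    have hle : Ideal.span {x} ≤ maximalIdeal A :=
      (Ideal.span_singleton_le_iff_mem _).mpr (hFm hx)
    rw [h] at hle
    exact (IsLocalRing.maximalIdeal.isMaximal A).ne_top (top_le_iff.mp hle)
  -- e₀ ≥ 1
  have he1 : 1 ≤ e₀ := by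
    have hnt : Nontrivial (A ⧸ Ideal.span {x}) :=
      Submodule.Quotient.nontrivial_iff.mpr (lt_top_iff_ne_top.mpr hxne).ne
    have hbt : (⊥ : Submodule A (A ⧸ Ideal.span {x})) ≠ ⊤ := by
      obtain ⟨q, hq⟩ := exists_ne (0 : A ⧸ Ideal.span {x})
      intro h
      have hqmem : q ∈ (⊥ : Submodule A (A ⧸ Ideal.span {x})) := by
        rw [h]; exact Submodule.mem_top
      exact hq (by simpa using hqmem)
    let p : LTSeries (Submodule A (A ⧸ Ideal.span {x})) :=
      (RelSeries.singleton _ ⊥).snoc ⊤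
        (by rw [RelSeries.last_singleton]; exact lt_of_le_of_ne bot_le hbt)
    have hlp := Order.LTSeries.length_le_krullDim p
    rw [show Order.krullDim (Submodule A (A ⧸ Ideal.span {x}))
        = moduleLength A (A ⧸ Ideal.span {x}) from rfl, he₀] at hlp
    have : p.length = 1 := by simp [p, RelSeries.snoc_length]
    rw [this] at hlp
    exact natcast_le_withbot.mp hlp
  constructor
  · intro n hn1 hn2
    have hone' := hone (n + 1) (by omega) (by omega)
    simp only [Nat.add_one_sub_one] at hone'
    have hkey := key_length x hxreg (F n) he₀ (hlam n)
    have heq : ((lam (n + 1) + 1 : ℕ) : WithBot ℕ∞) = ((e₀ + lam n : ℕ) : WithBot ℕ∞) :=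
      hone'.symm.trans hkey
    have : lam (n + 1) + 1 = e₀ + lam n := by exact_mod_cast heq
    omega
  · intro n hn
    have hkey := key_length x hxreg (F n) he₀ (hlam n)
    rw [← hred n hn, hlam (n + 1)] at hkey
    have : lam (n + 1) = e₀ + lam n := by exact_mod_cast hkey
    omega
end

section
/- Let a ≥ 2, b ≥ a be integers with d = gcd(a,b), and set r = ⌊(a-1)b/a⌋. For n ≥ 1 define ℓ_n = min{k ≥ 1 : n ≤ ⌊kb/a⌋}. If b ≡ 0 (mod a) or b ≡ d (mod a), then ℓ_n + ℓ_{r+1-n} = a for every n with 1 ≤ n ≤ r. -/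
lemma Linf (a b n : ℕ) (ha : 0 < a) (hb : 0 < b) (hn : 1 ≤ n) :
    sInf {k : ℕ | 1 ≤ k ∧ n ≤ (k * b) / a} = (n * a - 1) / b + 1 := by
  set k₀ := (n * a - 1) / b + 1 with hk₀
  have hna : 1 ≤ n * a := Nat.one_le_iff_ne_zero.mpr (by positivity)
  have hmem : k₀ ∈ {k : ℕ | 1 ≤ k ∧ n ≤ (k * b) / a} := by
    constructor
    · exact Nat.succ_le_succ (Nat.zero_le _)
    · rw [Nat.le_div_iff_mul_le ha]
      have h1 := Nat.div_add_mod (n * a - 1) b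
      have h2 := Nat.mod_lt (n * a - 1) hb
      have h3 : k₀ * b = b * ((n * a - 1) / b) + b := by rw [hk₀]; ring
      omega
  apply le_antisymm
  · exact Nat.sInf_le hmem
  · apply le_csInf ⟨k₀, hmem⟩
    rintro k ⟨hk1, hk2⟩
    rw [Nat.le_div_iff_mul_le ha] at hk2
    have : (n * a - 1) / b < k := by
      rw [Nat.div_lt_iff_lt_mul hb]
      omega
    omega

/-- Let `2 ≤ a ≤ b`, `d = gcd(a,b)`, `r = ⌊(a-1)b/a⌋` and
`ℓ_n = min{k ≥ 1 : n ≤ ⌊kb/a⌋}`.  If `b ≡ 0 (mod a)` or `b ≡ d (mod a)`,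
then `ℓ_n + ℓ_{r+1-n} = a` for every `1 ≤ n ≤ r`. -/
theorem stmt17 (a b d r : ℕ) (ha : 2 ≤ a) (hab : a ≤ b) (hd : d = Nat.gcd a b)
    (hr : r = ((a - 1) * b) / a)
    (L : ℕ → ℕ) (hL : ∀ n, L n = sInf {k : ℕ | 1 ≤ k ∧ n ≤ (k * b) / a})
    (hmod : b % a = 0 ∨ b % a = d % a) :
    ∀ n, 1 ≤ n → n ≤ r → L n + L (r + 1 - n) = a := by
  have ha0 : 0 < a := by omega
  have hb0 : 0 < b := by omega
  -- unified setup: e divides a and b, 1 ≤ e ≤ a, (r+1)*a = (a-1)*b + e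
  obtain ⟨e, he1, hea, heda, hedb, hre⟩ :
      ∃ e, 1 ≤ e ∧ e ≤ a ∧ e ∣ a ∧ e ∣ b ∧ (r + 1) * a = (a - 1) * b + e := by
    rcases hmod with h | h
    · refine ⟨a, by omega, le_refl a, dvd_refl a, Nat.dvd_of_mod_eq_zero h, ?_⟩
      have hdvd : a ∣ (a - 1) * b := Dvd.dvd.mul_left (Nat.dvd_of_mod_eq_zero h) (a - 1)
      have : r * a = (a - 1) * b := by rw [hr]; exact Nat.div_mul_cancel hdvd
      have h2 : (r + 1) * a = r * a + a := by ring
      omega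
    · by_cases hba : b % a = 0
      · refine ⟨a, by omega, le_refl a, dvd_refl a, Nat.dvd_of_mod_eq_zero hba, ?_⟩
        have hdvd : a ∣ (a - 1) * b := Dvd.dvd.mul_left (Nat.dvd_of_mod_eq_zero hba) (a - 1)
        have : r * a = (a - 1) * b := by rw [hr]; exact Nat.div_mul_cancel hdvd
        have h2 : (r + 1) * a = r * a + a := by ring
        omega
      · have hda : d ∣ a := hd ▸ Nat.gcd_dvd_left a b
        have hdb : d ∣ b := hd ▸ Nat.gcd_dvd_right a b
        have hd0 : 0 < d := by
          rw [hd]; exact Nat.gcd_pos_of_pos_left b ha0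
        have hdlea : d ≤ a := Nat.le_of_dvd ha0 hda
        have hdlta : d < a := by
          rcases lt_or_eq_of_le hdlea with h' | h'
          · exact h'
          · exact absurd (Nat.mod_eq_zero_of_dvd (h' ▸ hdb)) hba
        have hdm : d % a = d := Nat.mod_eq_of_lt hdlta
        rw [hdm] at h
        refine ⟨d, hd0, hdlea, hda, hdb, ?_⟩
        -- compute ((a-1)*b) % a = a - d
        have hm1 : ((a - 1) * b) % a = ((a - 1) * d) % a := by
          rw [Nat.mul_mod, h, Nat.mul_mod (a - 1) d, hdm]
        have hid : (a - 1) * d = (a - d) + a * (d - 1) := by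
          zify [show 1 ≤ a by omega, show d ≤ a by omega, show 1 ≤ d by omega]
          ring
        have hm2 : ((a - 1) * b) % a = a - d := by
          rw [hm1, hid, Nat.add_mul_mod_self_left, Nat.mod_eq_of_lt (by omega)]
        have h1 := Nat.div_add_mod ((a - 1) * b) a
        rw [hm2, ← hr] at h1
        have h2 : (r + 1) * a = a * r + a := by ring
        omega
  -- main computation
  intro n hn1 hnr
  set m := r + 1 - n with hm
  have hm1 : 1 ≤ m := by omega
  have hsum : n * a + m * a = (a - 1) * b + e := by
    have : n * a + m * a = (r + 1) * a := by
      rw [← Nat.add_mul]; congr 1; omega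
    omega
  rw [hL n, hL m, Linf a b n ha0 hb0 hn1, Linf a b m ha0 hb0 hm1]
  have hena : e ≤ n * a := le_trans hea (Nat.le_mul_of_pos_left a hn1)
  -- step1 : (n*a - 1)/b = (n*a - e)/b
  have step1 : (n * a - 1) / b = (n * a - e) / b := by
    apply le_antisymm
    · set j := (n * a - 1) / b with hj
      have hjle : j * b ≤ n * a - 1 := Nat.div_mul_le_self _ _
      have hdiff : e ∣ n * a - j * b :=
        Nat.dvd_sub (Dvd.dvd.mul_left heda n) (Dvd.dvd.mul_left hedb j)
      have hdpos : 1 ≤ n * a - j * b := by omega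
      have : e ≤ n * a - j * b := Nat.le_of_dvd (by omega) hdiff
      have : j * b ≤ n * a - e := by omega
      exact (Nat.le_div_iff_mul_le hb0).mpr this
    · exact Nat.div_le_div_right (by omega)
  rw [step1]
  -- now: (n*a - e)/b + (m*a - 1)/b = a - 2
  set u := n * a - e with hu
  set v := m * a - 1 with hv
  have hma1 : 1 ≤ m * a := Nat.one_le_iff_ne_zero.mpr (by positivity)
  have huv : u + v = (a - 1) * b - 1 := by
    have hab1 : b ≤ (a - 1) * b := Nat.le_mul_of_pos_left b (by omega)
    omega
  have h1 := Nat.div_add_mod u b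
  have h2 := Nat.div_add_mod v b
  have hα := Nat.mod_lt u hb0
  have hβ := Nat.mod_lt v hb0
  -- (u+v) % b = b - 1
  have hsplit : u + v = (b - 1) + b * (a - 2) := by
    rw [huv]
    zify [show 1 ≤ b by omega, show 2 ≤ a by omega, show 1 ≤ a by omega,
      show (1:ℕ) ≤ (a-1)*b from by
        calc (1:ℕ) ≤ b := by omega
        _ ≤ (a-1)*b := Nat.le_mul_of_pos_left b (by omega)]
    ring
  have hmodsum : (u % b + v % b) % b = b - 1 := by
    rw [← Nat.add_mod, hsplit, Nat.add_mul_mod_self_left, Nat.mod_eq_of_lt (by omega)]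
  have hmods : u % b + v % b = b - 1 := by
    rcases lt_or_ge (u % b + v % b) b with h' | h'
    · rwa [Nat.mod_eq_of_lt h'] at hmodsum
    · have heq : (u % b + v % b) % b = u % b + v % b - b := by
        rw [Nat.mod_eq_sub_mod h', Nat.mod_eq_of_lt (by omega)]
      omega
  -- conclude
  have hbuv : b * (u / b) + b * (v / b) = b * (a - 2) := by omega
  have hfac : b * (u / b + v / b) = b * (a - 2) := by rw [Nat.mul_add]; omega
  have hfin : u / b + v / b = a - 2 := Nat.eq_of_mul_eq_mul_left hb0 hfac
  omega
end

section
/- Let a ≥ 3, b ≥ a be integers with d = gcd(a,b), a' = a/d, and suppose b/d ≡ δ (mod a') with 2 ≤ δ ≤ a'-1. Set r = ⌊(a-1)b/a⌋, k₁ = ⌈a'/δ⌉, n₁ = (b/d - δ)/a', and t₁ = (k₁-1)·n₁ + 1. Define ℓ_n = min{k ≥ 1 : n ≤ ⌊kb/a⌋}. Then ℓ_{t₁} + ℓ_{r+1-t₁} = a + 1. -/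
/-- Non-Gorenstein case: with `a' = a/d`, `b' = b/d`, `δ = b' mod a'` satisfying
`2 ≤ δ ≤ a'-1`, `n₁ = (b'-δ)/a'`, `r = ⌊(a-1)b/a⌋`, `k₁ = ⌈a'/δ⌉`,
`t₁ = (k₁-1)n₁+1` and `ℓ_n = min{k ≥ 1 : n ≤ ⌊kb/a⌋}`, one has
`ℓ_{t₁} + ℓ_{r+1-t₁} = a + 1`. -/
theorem stmt18 (a b d a' b' δ n₁ r k₁ t₁ : ℕ) (ha : 3 ≤ a) (hab : a ≤ b)
    (hd : d = Nat.gcd a b) (ha' : a' = a / d) (hb' : b' = b / d)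
    (hδ : δ = b' % a') (hδ2 : 2 ≤ δ) (hδle : δ ≤ a' - 1)
    (hn₁ : n₁ = (b' - δ) / a') (hr : r = ((a - 1) * b) / a)
    (hk₁ : (k₁ : ℤ) = ⌈(a' : ℚ) / (δ : ℚ)⌉) (ht₁ : t₁ = (k₁ - 1) * n₁ + 1)
    (L : ℕ → ℕ) (hL : ∀ n, L n = sInf {k : ℕ | 1 ≤ k ∧ n ≤ (k * b) / a}) :
    L t₁ + L (r + 1 - t₁) = a + 1 := by
  have ha0 : 0 < a := by omega
  have hd0 : 0 < d := by
    rw [hd]; exact Nat.gcd_pos_of_pos_left _ ha0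
  have hda : a = d * a' := by
    rw [ha', Nat.mul_div_cancel' (hd ▸ Nat.gcd_dvd_left a b)]
  have hdb : b = d * b' := by
    rw [hb', Nat.mul_div_cancel' (hd ▸ Nat.gcd_dvd_right a b)]
  have hcop : Nat.Coprime a' b' := by
    rw [ha', hb', hd]
    exact Nat.coprime_div_gcd_div_gcd (Nat.gcd_pos_of_pos_left _ ha0)
  have ha'1 : 1 ≤ a' := by
    rcases Nat.eq_zero_or_pos a' with h | h
    · rw [h, Nat.mul_zero] at hda; omega
    · exact h
  have ha'3 : 3 ≤ a' := by omega
  have hb'a' : a' ≤ b' := by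
    have : d * a' ≤ d * b' := by rw [← hda, ← hdb]; exact hab
    exact Nat.le_of_mul_le_mul_left this hd0
  -- b' = n₁ * a' + δ
  have hδlt : δ < a' := by omega
  have hdivmod := Nat.div_add_mod b' a'
  have hn₁' : n₁ = b' / a' := by
    rw [hn₁]
    have h1 : b' - δ = (b' / a') * a' := by
      rw [Nat.mul_comm]; omega
    have h2 : b' - δ = a' * (b' / a') := by omega
    rw [h2, Nat.mul_div_cancel_left _ (by omega : 0 < a')]
  have hb'eq : b' = n₁ * a' + δ := by rw [hn₁', Nat.mul_comm]; omega
  have hn₁1 : 1 ≤ n₁ := by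
    rcases Nat.eq_zero_or_pos n₁ with h | h
    · rw [h] at hb'eq; omega
    · exact h
  -- k₁ bounds from the ceiling
  have hδQ : (0 : ℚ) < (δ : ℚ) := by positivity
  have hk₁l : a' ≤ k₁ * δ := by
    have h1 := Int.le_ceil ((a' : ℚ) / (δ : ℚ))
    rw [← hk₁] at h1
    have h2 : (a' : ℚ) ≤ (k₁ : ℚ) * (δ : ℚ) := by
      rw [div_le_iff₀ hδQ] at h1
      push_cast at h1 ⊢
      linarith
    exact_mod_cast h2
  have hk₁u : k₁ * δ < a' + δ := by
    have h1 := Int.ceil_lt_add_one ((a' : ℚ) / (δ : ℚ))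
    rw [← hk₁] at h1
    have h1' : ((k₁ : ℚ) - 1) < (a' : ℚ) / (δ : ℚ) := by
      push_cast at h1 ⊢; linarith
    rw [lt_div_iff₀ hδQ] at h1'
    have h2 : (k₁ : ℚ) * (δ : ℚ) < (a' : ℚ) + (δ : ℚ) := by nlinarith
    exact_mod_cast h2
  have hk₁2 : 2 ≤ k₁ := by
    rcases Nat.lt_or_ge k₁ 2 with h | h
    · interval_cases k₁ <;> omega
    · exact h
  obtain ⟨e, he⟩ : ∃ e, k₁ = e + 1 := ⟨k₁ - 1, by omega⟩
  have he1 : 1 ≤ e := by omega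
  -- m
  have hk₁δ : k₁ * δ = e * δ + δ := by rw [he]; ring
  have hm' : e * δ < a' := by omega
  obtain ⟨m, hm⟩ : ∃ m, a' = e * δ + m := ⟨a' - e * δ, by omega⟩
  have hm1 : 1 ≤ m := by omega
  have hmδ : m ≤ δ := by omega
  have hmne : m ≠ δ := by
    intro hcontra
    have hdvd1 : δ ∣ a' := by rw [hm, hcontra]; exact ⟨e + 1, by ring⟩
    have hdvd2 : δ ∣ b' := by rw [hb'eq]; exact Dvd.dvd.add (Dvd.dvd.mul_left hdvd1 n₁) dvd_rfl
    have hdvd3 : δ ∣ 1 := hcop ▸ Nat.dvd_gcd hdvd1 hdvd2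
    have := Nat.le_of_dvd one_pos hdvd3
    omega
  obtain ⟨s, hs⟩ : ∃ s, δ = m + s := ⟨δ - m, by omega⟩
  have hs1 : 1 ≤ s := by omega
  -- k₁ < a
  have heδ : e * 2 ≤ e * δ := Nat.mul_le_mul_left e hδ2
  have ha'a : a' ≤ a := by
    have : 1 * a' ≤ d * a' := Nat.mul_le_mul_right a' hd0
    omega
  have hk₁a : k₁ < a := by omega
  obtain ⟨v, hv⟩ : ∃ v, a = k₁ + v := ⟨a - k₁, by omega⟩
  have hv1 : 1 ≤ v := by omega
  -- r = b - n₁ - 1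
  have hdδa : d * δ + d ≤ a := by
    have h1 : d * (δ + 1) ≤ d * a' := Nat.mul_le_mul_left d (by omega)
    have h2 : d * (δ + 1) = d * δ + d := by ring
    omega
  have hdδ2 : 1 * 2 ≤ d * δ := Nat.mul_le_mul hd0 hδ2
  obtain ⟨ρ, hρ⟩ : ∃ ρ, a = d * δ + ρ := ⟨a - d * δ, by omega⟩
  have hρ1 : 1 ≤ ρ := by omega
  have hbn₁ : n₁ + 1 ≤ b := by
    have h1 : n₁ * 1 ≤ n₁ * a' := Nat.mul_le_mul_left n₁ ha'1
    have h2 : 1 * b' ≤ d * b' := Nat.mul_le_mul_right b' hd0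
    omega
  obtain ⟨q, hqe⟩ : ∃ q, b = q + n₁ + 1 := ⟨b - n₁ - 1, by omega⟩
  have hkey : (a - 1) * b = ρ + q * a := by
    have h1 : 1 ≤ a := by omega
    zify [h1]
    have hdbZ : (b : ℤ) = d * b' := by exact_mod_cast hdb
    have hdaZ : (a : ℤ) = d * a' := by exact_mod_cast hda
    have hb'Z : (b' : ℤ) = n₁ * a' + δ := by exact_mod_cast hb'eq
    have hρZ : (a : ℤ) = d * δ + ρ := by exact_mod_cast hρ
    have hqZ : (b : ℤ) = q + n₁ + 1 := by exact_mod_cast hqe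
    linear_combination (a : ℤ) * hqZ + hρZ - hdbZ - (d : ℤ) * hb'Z + (n₁ : ℤ) * hdaZ
  have hrq : r = q := by
    rw [hr, hkey, Nat.add_mul_div_right _ _ ha0, Nat.div_eq_of_lt (by omega)]
    omega
  -- t₁ * a' = e * b' + m
  have ht₁' : t₁ = e * n₁ + 1 := by rw [ht₁, he]; simp
  have hA : t₁ * a' = e * b' + m := by
    zify
    have h1 : (t₁ : ℤ) = e * n₁ + 1 := by exact_mod_cast ht₁'
    have h2 : (b' : ℤ) = n₁ * a' + δ := by exact_mod_cast hb'eq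
    have h3 : (a' : ℤ) = e * δ + m := by exact_mod_cast hm
    linear_combination (a' : ℤ) * h1 - (e : ℤ) * h2 + h3
  -- (r+1) * a' = t₁ * a' + v * b' + s
  have hB : (r + 1) * a' = t₁ * a' + v * b' + s := by
    zify
    have h1 : (r : ℤ) + 1 + n₁ = b := by
      have e1 : (b : ℤ) = q + n₁ + 1 := by exact_mod_cast hqe
      have e2 : (r : ℤ) = q := by exact_mod_cast hrq
      omega
    have h2 : (b : ℤ) = d * b' := by exact_mod_cast hdb
    have h3 : (a : ℤ) = d * a' := by exact_mod_cast hda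
    have h4 : (b' : ℤ) = n₁ * a' + δ := by exact_mod_cast hb'eq
    have h5 : (t₁ : ℤ) * a' = e * b' + m := by exact_mod_cast hA
    have h6 : (δ : ℤ) = m + s := by exact_mod_cast hs
    have h7 : (a : ℤ) = (e + 1) + v := by
      have e1 : (a : ℤ) = k₁ + v := by exact_mod_cast hv
      have e2 : (k₁ : ℤ) = e + 1 := by exact_mod_cast he
      omega
    linear_combination (a' : ℤ) * h1 - h5 + h6 + (a' : ℤ) * h2 - (b' : ℤ) * h3 + (b' : ℤ) * h7 + h4
  have ht₁r : t₁ ≤ r + 1 := by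
    have h1 : t₁ * a' ≤ (r + 1) * a' := by omega
    exact Nat.le_of_mul_le_mul_right h1 (by omega)
  obtain ⟨n, hn⟩ : ∃ n, r + 1 = t₁ + n := ⟨r + 1 - t₁, by omega⟩
  have hC : n * a' = v * b' + s := by
    have h1 : (t₁ + n) * a' = t₁ * a' + v * b' + s := by rw [← hn]; exact hB
    rw [Nat.add_mul] at h1
    omega
  -- value lemma for L
  have Lval : ∀ N u : ℕ, N * a ≤ (u + 1) * b → u * b < N * a → L N = u + 1 := by
    intro N u h1 h2
    rw [hL]
    have hmem : (u + 1) ∈ {k : ℕ | 1 ≤ k ∧ N ≤ k * b / a} :=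
      ⟨by omega, (Nat.le_div_iff_mul_le ha0).2 h1⟩
    refine le_antisymm (Nat.sInf_le hmem) ?_
    by_contra hlt
    push_neg at hlt
    obtain ⟨hk1, hk2⟩ := Nat.sInf_mem (⟨_, hmem⟩ : Set.Nonempty _)
    have h3 : N * a ≤ sInf {k : ℕ | 1 ≤ k ∧ N ≤ k * b / a} * b :=
      (Nat.le_div_iff_mul_le ha0).1 hk2
    have h4 : sInf {k : ℕ | 1 ≤ k ∧ N ≤ k * b / a} * b ≤ u * b :=
      Nat.mul_le_mul_right _ (by omega)
    exact absurd (h3.trans h4) (Nat.not_le.mpr h2)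
  -- L t₁ = k₁
  have hL1 : L t₁ = e + 1 := by
    apply Lval
    · calc t₁ * a = d * (t₁ * a') := by rw [hda]; ring
        _ = d * (e * b' + m) := by rw [hA]
        _ ≤ d * ((e + 1) * b') := Nat.mul_le_mul_left d (by
            have : (e + 1) * b' = e * b' + b' := by ring
            omega)
        _ = (e + 1) * b := by rw [hdb]; ring
    · calc e * b = d * (e * b') := by rw [hdb]; ring
        _ < d * (e * b' + m) := mul_lt_mul_of_pos_left (by omega) hd0
        _ = t₁ * a := by rw [hda, ← hA]; ring
  have hL2 : L n = v + 1 := by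
    apply Lval
    · calc n * a = d * (n * a') := by rw [hda]; ring
        _ = d * (v * b' + s) := by rw [hC]
        _ ≤ d * ((v + 1) * b') := Nat.mul_le_mul_left d (by
            have : (v + 1) * b' = v * b' + b' := by ring
            omega)
        _ = (v + 1) * b := by rw [hdb]; ring
    · calc v * b = d * (v * b') := by rw [hdb]; ring
        _ < d * (v * b' + s) := mul_lt_mul_of_pos_left (by omega) hd0
        _ = n * a := by rw [hda, ← hC]; ring
  have hrn : r + 1 - t₁ = n := by omega
  rw [hrn, hL1, hL2]
  omega
end
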